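/- arXiv:2103.08753 — 2 statements merged into one kernel-verified Lean document; each statement's English description precedes it below -/
import Mathlib

section
/- Let 0 < α ≤ 1/2, H̃ > 0, and suppose H_t ≥ H̃·t^{-α} for all t ≥ 1. Choose λ₁ = H̃·T^α and λ_t = 0 for t ≥ 2. Then for constants C₁, D, Ĝ ≥ 0 and T ≥ 1, C₁ + (5/2)·D²·∑_{t=1}^T λ_t + Ĝ²·∑_{t=1}^T 1/(∑_{k=1}^t H_k + ∑_{k=1}^t λ_k) ≤ C₁ + (5H̃/2)·D²·T^α + (Ĝ²·(1-α)/(H̃·α))·T^α. -/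
/-!
Since `x ↦ x ^ p` is concave for `0 ≤ p ≤ 1`, its tangent lines lie above it; telescoping the
tangent inequality at consecutive integers gives both a lower bound
`∑_{k ≤ t} k^(-α) ≥ (t^(1-α) - 1)/(1-α) + t^(-α)` and the upper bound `∑_{t ≤ T} t^(α-1) ≤ T^α / α`.
For `t ≤ T` the burst contributes `T^α ≥ t^α`, and `t^α + t^(-α) ≥ 2 ≥ 1/(1-α)` when `α ≤ 1/2`
absorbs the `-1/(1-α)`, so the `t`-th denominator is at least `H̃ t^(1-α)/(1-α)`.
-/

open Finset Real

lemma rpow_add_le_rpow_add_mul_rpow_sub_one {x h p : ℝ} (hx : 0 < x) (hxh : 0 ≤ x + h)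
    (hp0 : 0 ≤ p) (hp1 : p ≤ 1) :
    (x + h) ^ p ≤ x ^ p + p * x ^ (p - 1) * h := by
  have hratio : -1 ≤ h / x := by rw [le_div_iff₀ hx]; linarith
  have hbern : (1 + h / x) ^ p ≤ 1 + p * (h / x) :=
    rpow_one_add_le_one_add_mul_self hratio hp0 hp1
  have hsplit : x + h = x * (1 + h / x) := by field_simp
  have hpow : x ^ (p - 1) = x ^ p / x := by rw [rpow_sub_one hx.ne']
  calc (x + h) ^ p = x ^ p * (1 + h / x) ^ p := by rw [hsplit, mul_rpow hx.le (by linarith)]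
    _ ≤ x ^ p * (1 + p * (h / x)) := by gcongr
    _ = x ^ p + p * x ^ (p - 1) * h := by rw [hpow]; ring

lemma rpow_sub_one_add_mul_rpow_le_mul_sum {p : ℝ} (hp0 : 0 ≤ p) (hp1 : p ≤ 1) {t : ℕ}
    (ht : 1 ≤ t) :
    (t : ℝ) ^ p - 1 + p * (t : ℝ) ^ (p - 1) ≤ p * ∑ k ∈ Icc 1 t, (k : ℝ) ^ (p - 1) := by
  induction t, ht using Nat.le_induction with
  | base => simp
  | succ t ht ih =>
    have htR : (0 : ℝ) < t := by exact_mod_cast ht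
    have htangent := rpow_add_le_rpow_add_mul_rpow_sub_one htR (by positivity) hp0 hp1 (h := 1)
    rw [sum_Icc_succ_top (by omega)]
    push_cast
    linarith

lemma mul_sum_rpow_sub_one_le_rpow {p : ℝ} (hp0 : 0 ≤ p) (hp1 : p ≤ 1) (n : ℕ) :
    p * ∑ k ∈ Icc 1 n, (k : ℝ) ^ (p - 1) ≤ (n : ℝ) ^ p := by
  induction n with
  | zero => simp [rpow_nonneg]
  | succ n ih =>
    have htangent := rpow_add_le_rpow_add_mul_rpow_sub_one (x := (n : ℝ) + 1) (h := -1)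
      (by positivity) (by simp) hp0 hp1
    rw [sum_Icc_succ_top (by omega)]
    push_cast at htangent ⊢
    simp only [add_neg_cancel_right] at htangent
    linarith

lemma two_le_rpow_add_rpow_neg {x : ℝ} (hx : 0 < x) (a : ℝ) : 2 ≤ x ^ a + x ^ (-a) := by
  have hy : 0 < x ^ a := rpow_pos_of_pos hx a
  have hinv : x ^ a * x ^ (-a) = 1 := by rw [← rpow_add hx, add_neg_cancel, rpow_zero]
  nlinarith [sq_nonneg (x ^ a - 1), sq_nonneg (x ^ (-a) - 1)]

lemma rpow_one_sub_le_mul_sum_rpow_neg_add {α : ℝ} (hα0 : 0 ≤ α) (hα : α ≤ 1 / 2)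
    {t T : ℕ} (ht : 1 ≤ t) (htT : t ≤ T) :
    (t : ℝ) ^ (1 - α) ≤ (1 - α) * (∑ k ∈ Icc 1 t, (k : ℝ) ^ (-α) + (T : ℝ) ^ α) := by
  have htR : (0 : ℝ) < t := by exact_mod_cast ht
  have hsum := rpow_sub_one_add_mul_rpow_le_mul_sum (p := 1 - α) (by linarith) (by linarith) ht
  simp only [sub_sub_cancel_left] at hsum
  have hmono : (t : ℝ) ^ α ≤ (T : ℝ) ^ α := by gcongr
  have hamgm := two_le_rpow_add_rpow_neg htR α
  nlinarith

lemma sum_Icc_eq_of_eq_zero_of_two_le {lam : ℕ → ℝ} (hlam : ∀ t, 2 ≤ t → lam t = 0) {t : ℕ}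
    (ht : 1 ≤ t) : ∑ k ∈ Icc 1 t, lam k = lam 1 := by
  refine sum_eq_single_of_mem 1 (mem_Icc.mpr ⟨le_rfl, ht⟩) fun k hk hk1 => hlam k ?_
  have := (mem_Icc.mp hk).1
  omega

lemma one_div_sum_add_burst_le {α Htil : ℝ} (hα0 : 0 ≤ α) (hα : α ≤ 1 / 2) (hHtil : 0 < Htil)
    {H : ℕ → ℝ} (hH : ∀ t : ℕ, 1 ≤ t → Htil * (t : ℝ) ^ (-α) ≤ H t) {t T : ℕ} (ht : 1 ≤ t)
    (htT : t ≤ T) :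
    1 / (∑ k ∈ Icc 1 t, H k + Htil * (T : ℝ) ^ α) ≤ (1 - α) / Htil * (t : ℝ) ^ (α - 1) := by
  have htR : (0 : ℝ) < t := by exact_mod_cast ht
  have hH_sum : Htil * ∑ k ∈ Icc 1 t, (k : ℝ) ^ (-α) ≤ ∑ k ∈ Icc 1 t, H k := by
    rw [mul_sum]
    exact sum_le_sum fun k hk => hH k (mem_Icc.mp hk).1
  have hkey := rpow_one_sub_le_mul_sum_rpow_neg_add hα0 hα ht htT
  have hpos : 0 < Htil * (t : ℝ) ^ (1 - α) := by positivity
  have hden : Htil * (t : ℝ) ^ (1 - α) ≤ (1 - α) * (∑ k ∈ Icc 1 t, H k + Htil * (T : ℝ) ^ α) :=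
    calc Htil * (t : ℝ) ^ (1 - α)
        ≤ (1 - α) * (Htil * ∑ k ∈ Icc 1 t, (k : ℝ) ^ (-α) + Htil * (T : ℝ) ^ α) := by
          nlinarith
      _ ≤ (1 - α) * (∑ k ∈ Icc 1 t, H k + Htil * (T : ℝ) ^ α) := by gcongr; linarith
  have hden_pos : 0 < ∑ k ∈ Icc 1 t, H k + Htil * (T : ℝ) ^ α := by nlinarith
  calc 1 / (∑ k ∈ Icc 1 t, H k + Htil * (T : ℝ) ^ α) ≤ (1 - α) / (Htil * (t : ℝ) ^ (1 - α)) := by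
        rw [div_le_div_iff₀ hden_pos hpos]; linarith
    _ = (1 - α) / Htil * (t : ℝ) ^ (α - 1) := by
        rw [← neg_sub, rpow_neg htR.le]; field_simp

theorem intermediate_regret_general (α Htil C₁ D Ghat : ℝ)
    (hα0 : 0 < α) (hα : α ≤ 1 / 2) (hHtil : 0 < Htil)
    (T : ℕ) (hT : 1 ≤ T)
    (H lam : ℕ → ℝ) (hH : ∀ t : ℕ, 1 ≤ t → Htil * (t : ℝ) ^ (-α) ≤ H t)
    (hlam1 : lam 1 = Htil * (T : ℝ) ^ α) (hlam : ∀ t, 2 ≤ t → lam t = 0) :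
    C₁ + 5 / 2 * D ^ 2 * (∑ t ∈ Finset.Icc 1 T, lam t) +
        Ghat ^ 2 * ∑ t ∈ Finset.Icc 1 T,
          1 / ((∑ k ∈ Finset.Icc 1 t, H k) + ∑ k ∈ Finset.Icc 1 t, lam k)
      ≤ C₁ + 5 * Htil / 2 * D ^ 2 * (T : ℝ) ^ α
        + Ghat ^ 2 * (1 - α) / (Htil * α) * (T : ℝ) ^ α := by
  have hsum : ∑ t ∈ Icc 1 T, 1 / (∑ k ∈ Icc 1 t, H k + ∑ k ∈ Icc 1 t, lam k)
      ≤ (1 - α) / (Htil * α) * (T : ℝ) ^ α :=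
    calc ∑ t ∈ Icc 1 T, 1 / (∑ k ∈ Icc 1 t, H k + ∑ k ∈ Icc 1 t, lam k)
        ≤ ∑ t ∈ Icc 1 T, (1 - α) / Htil * (t : ℝ) ^ (α - 1) := by
          refine sum_le_sum fun t ht => ?_
          obtain ⟨ht1, htT⟩ := mem_Icc.mp ht
          rw [sum_Icc_eq_of_eq_zero_of_two_le hlam ht1, hlam1]
          exact one_div_sum_add_burst_le hα0.le hα hHtil hH ht1 htT
      _ = (1 - α) / (Htil * α) * (α * ∑ t ∈ Icc 1 T, (t : ℝ) ^ (α - 1)) := by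
          rw [← mul_sum]; field_simp
      _ ≤ (1 - α) / (Htil * α) * (T : ℝ) ^ α := by
          gcongr
          · have : 0 ≤ 1 - α := by linarith
            positivity
          · exact mul_sum_rpow_sub_one_le_rpow hα0.le (by linarith) T
  rw [sum_Icc_eq_of_eq_zero_of_two_le hlam hT, hlam1]
  have hGhat_sum := mul_le_mul_of_nonneg_left hsum (sq_nonneg Ghat)
  linarith [show 5 / 2 * D ^ 2 * (Htil * (T : ℝ) ^ α) = 5 * Htil / 2 * D ^ 2 * (T : ℝ) ^ α by ring,
    show Ghat ^ 2 * ((1 - α) / (Htil * α) * (T : ℝ) ^ α)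
      = Ghat ^ 2 * (1 - α) / (Htil * α) * (T : ℝ) ^ α by ring]

/-- Case 3 of Corollary 4: with per-round strong convexity `H_t ≥ H̃ t^{-α}`,
`0 < α ≤ 1/2`, and the burst `λ₁ = H̃ T^α`, the master bound gives `O(T^α)` regret. -/
theorem intermediate_regret (α Htil C₁ D Ghat : ℝ)
    (hα0 : 0 < α) (hα : α ≤ 1 / 2) (hHtil : 0 < Htil)
    (hC₁ : 0 ≤ C₁) (hD : 0 ≤ D) (hGhat : 0 ≤ Ghat) (T : ℕ) (hT : 1 ≤ T)
    (H lam : ℕ → ℝ) (hH : ∀ t : ℕ, 1 ≤ t → Htil * (t : ℝ) ^ (-α) ≤ H t)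
    (hHnn : ∀ t, 0 ≤ H t)
    (hlam1 : lam 1 = Htil * (T : ℝ) ^ α) (hlam : ∀ t, 2 ≤ t → lam t = 0) :
    C₁ + 5 / 2 * D ^ 2 * (∑ t ∈ Finset.Icc 1 T, lam t) +
        Ghat ^ 2 * ∑ t ∈ Finset.Icc 1 T,
          1 / ((∑ k ∈ Finset.Icc 1 t, H k) + ∑ k ∈ Finset.Icc 1 t, lam k)
      ≤ C₁ + 5 * Htil / 2 * D ^ 2 * (T : ℝ) ^ α
        + Ghat ^ 2 * (1 - α) / (Htil * α) * (T : ℝ) ^ α :=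
  intermediate_regret_general α Htil C₁ D Ghat hα0 hα hHtil T hT H lam hH hlam1 hlam
end

section
/- Let f_t : K → ℝ (t = 1, ..., T) be H_t-strongly convex differentiable functions on a closed convex set K with diameter at most D, with ‖∇f_t(x)‖ ≤ G_t on K. Let g_t(x) = (λ_t/2)‖x‖² with λ_t ≥ 0, and run updates u_{t+1} = Proj_K(u_t - η_{t+1}·∇(f_t + g_t)(u_t)) with η_{t+1} = 1/(∑_{k=1}^t H_k + ∑_{k=1}^t λ_k) > 0, starting from u_1 ∈ K and assuming 0 ∈ K. Then for every u* ∈ K, ∑_{t=1}^T f_t(u_t) - ∑_{t=1}^T f_t(u*) ≤ (D²/2)·∑_{t=1}^T λ_t + (1/2)·∑_{t=1}^T (G_t + λ_t·D)²/(∑_{k=1}^t H_k + ∑_{k=1}^t λ_k). -/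
open Finset
open scoped RealInnerProductSpace

/-!
Each round is controlled by three facts. The first-order strong convexity inequality for `f_t`,
together with the exact identity `g(x) - g(w) = ⟪λ x, x - w⟫ - (λ/2)‖x - w‖²` for
`g = (λ/2)‖·‖²`, bounds `f_t(u_t) - f_t(u*)` by `⟪∇(f_t + g_t)(u_t), u_t - u*⟫` minus
`((H_t + λ_t)/2)‖u_t - u*‖²`, up to the bias `(λ_t/2)D²`. Projection onto the convex set `K` does
not increase the distance to `u* ∈ K`, which bounds that inner product by
`(S_t/2)(‖u_t - u*‖² - ‖u_{t+1} - u*‖²) + ‖∇(f_t + g_t)(u_t)‖²/(2 S_t)`, where `S_t = 1/η_{t+1}`.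
Since `S_t = S_{t-1} + H_t + λ_t`, the distance terms telescope, and the gradient norm is at most
`G_t + λ_t D`.
-/

section InnerProductSpace

variable {E : Type*} [NormedAddCommGroup E] [InnerProductSpace ℝ E]

theorem norm_sub_sq_le_of_isNearest {K : Set E} (hK : Convex ℝ K) {p y w : E} (hp : p ∈ K)
    (hw : w ∈ K) (hmin : ∀ z ∈ K, ‖p - y‖ ≤ ‖z - y‖) : ‖p - w‖ ^ 2 ≤ ‖y - w‖ ^ 2 := by
  have : Nonempty K := ⟨⟨p, hp⟩⟩
  have hinf : ‖y - p‖ = ⨅ z : K, ‖y - (z : E)‖ := by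
    refine le_antisymm (le_ciInf fun z => ?_) (ciInf_le ⟨0, ?_⟩ (⟨p, hp⟩ : K))
    · simpa only [norm_sub_rev y] using hmin z z.2
    · rintro _ ⟨z, rfl⟩
      positivity
  have hobtuse : ⟪y - p, w - p⟫ ≤ 0 := (norm_eq_iInf_iff_real_inner_le_zero hK hp).mp hinf w hw
  have hexpand : ‖y - w‖ ^ 2 = ‖y - p‖ ^ 2 - 2 * ⟪y - p, w - p⟫ + ‖p - w‖ ^ 2 := by
    rw [show y - w = (y - p) - (w - p) by abel, norm_sub_sq_real, norm_sub_rev w]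
  nlinarith [sq_nonneg ‖y - p‖]

theorem inner_le_of_isNearest_sub_smul {K : Set E} (hK : Convex ℝ K) {x v p w : E} {S : ℝ}
    (hS : 0 < S) (hp : p ∈ K) (hw : w ∈ K)
    (hmin : ∀ z ∈ K, ‖p - (x - S⁻¹ • v)‖ ≤ ‖z - (x - S⁻¹ • v)‖) :
    ⟪v, x - w⟫ ≤ S / 2 * (‖x - w‖ ^ 2 - ‖p - w‖ ^ 2) + 1 / 2 * (‖v‖ ^ 2 / S) := by
  have hproj := norm_sub_sq_le_of_isNearest hK hp hw hmin
  have hexpand : ‖x - S⁻¹ • v - w‖ ^ 2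
      = ‖x - w‖ ^ 2 - 2 * S⁻¹ * ⟪v, x - w⟫ + S⁻¹ ^ 2 * ‖v‖ ^ 2 := by
    rw [show x - S⁻¹ • v - w = (x - w) - S⁻¹ • v by abel, norm_sub_sq_real, norm_smul,
      real_inner_smul_right, real_inner_comm, Real.norm_eq_abs, mul_pow, sq_abs]
    ring
  rw [hexpand] at hproj
  have hscaled : S / 2 * ‖p - w‖ ^ 2
      ≤ S / 2 * ‖x - w‖ ^ 2 - ⟪v, x - w⟫ + 1 / 2 * (‖v‖ ^ 2 / S) := by
    have := mul_le_mul_of_nonneg_left hproj (half_pos hS).le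
    field_simp at this ⊢
    linarith
  linarith

theorem real_inner_self_sub (x w : E) :
    ⟪x, x - w⟫ = (‖x‖ ^ 2 - ‖w‖ ^ 2 + ‖x - w‖ ^ 2) / 2 := by
  rw [inner_sub_right, real_inner_self_eq_norm_sq, norm_sub_sq_real]
  ring

theorem sub_le_inner_add_smul_of_strong {f : E → ℝ} {g x w : E} {H lam : ℝ}
    (hstrong : f x + ⟪g, w - x⟫ + H / 2 * ‖w - x‖ ^ 2 ≤ f w) :
    f x - f w ≤ ⟪g + lam • x, x - w⟫ - (H + lam) / 2 * ‖x - w‖ ^ 2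
      + lam / 2 * (‖w‖ ^ 2 - ‖x‖ ^ 2) := by
  rw [inner_add_left, real_inner_smul_left, real_inner_self_sub,
    show w - x = -(x - w) by abel, inner_neg_right, norm_neg] at *
  linarith

theorem regularized_ogd_step {K : Set E} (hK : Convex ℝ K) {f : E → ℝ} {g x w p : E}
    {G H lam D S₀ : ℝ} (hlam : 0 ≤ lam) (hg : ‖g‖ ≤ G) (hxD : ‖x‖ ≤ D) (hwD : ‖w‖ ≤ D)
    (hw : w ∈ K) (hp : p ∈ K)
    (hstrong : f x + ⟪g, w - x⟫ + H / 2 * ‖w - x‖ ^ 2 ≤ f w)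
    (hS : 0 < S₀ + H + lam)
    (hmin : ∀ z ∈ K, ‖p - (x - (S₀ + H + lam)⁻¹ • (g + lam • x))‖
      ≤ ‖z - (x - (S₀ + H + lam)⁻¹ • (g + lam • x))‖) :
    f x - f w ≤ D ^ 2 / 2 * lam + 1 / 2 * ((G + lam * D) ^ 2 / (S₀ + H + lam))
      + (S₀ / 2 * ‖x - w‖ ^ 2 - (S₀ + H + lam) / 2 * ‖p - w‖ ^ 2) := by
  have hconvex := sub_le_inner_add_smul_of_strong (lam := lam) hstrong
  have hdescent := inner_le_of_isNearest_sub_smul hK hS hp hw hmin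
  have hgrad : ‖g + lam • x‖ ≤ G + lam * D :=
    calc ‖g + lam • x‖ ≤ ‖g‖ + lam * ‖x‖ := by
          simpa only [norm_smul, Real.norm_of_nonneg hlam] using norm_add_le g (lam • x)
      _ ≤ G + lam * D := by gcongr
  have hgrad_sq : ‖g + lam • x‖ ^ 2 / (S₀ + H + lam) ≤ (G + lam * D) ^ 2 / (S₀ + H + lam) := by
    gcongr
  have hbias : lam / 2 * (‖w‖ ^ 2 - ‖x‖ ^ 2) ≤ D ^ 2 / 2 * lam := by
    have : ‖w‖ ^ 2 ≤ D ^ 2 := pow_le_pow_left₀ (norm_nonneg _) hwD 2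
    nlinarith [sq_nonneg ‖x‖]
  linarith

end InnerProductSpace

theorem sum_Icc_le_sum_add_sub {a c φ : ℕ → ℝ}
    (h : ∀ t, a (t + 1) ≤ c (t + 1) + (φ t - φ (t + 1))) (T : ℕ) : ∑ t ∈ Icc 1 T, a t ≤ ∑ t ∈ Icc 1 T, c t + (φ 0 - φ T) := by
  induction T with
  | zero => simp
  | succ T ih =>
    rw [sum_Icc_succ_top (by omega), sum_Icc_succ_top (by omega)]
    linarith [h T]

theorem adaptive_ogd_regret_general (n T : ℕ)
    (K : Set (EuclideanSpace ℝ (Fin n)))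
    (hKcv : Convex ℝ K) (h0K : (0 : _) ∈ K)
    (D : ℝ) (hD : ∀ x ∈ K, ∀ y ∈ K, ‖x - y‖ ≤ D)
    (f : ℕ → EuclideanSpace ℝ (Fin n) → ℝ)
    (f' : ℕ → EuclideanSpace ℝ (Fin n) → EuclideanSpace ℝ (Fin n))
    (G H lam : ℕ → ℝ) (hlam : ∀ t, 0 ≤ lam t)
    (hG : ∀ t, ∀ x ∈ K, ‖f' t x‖ ≤ G t)
    (hstrong : ∀ t, ∀ x ∈ K, ∀ y ∈ K,
      f t x + ⟪f' t x, y - x⟫ + H t / 2 * ‖y - x‖ ^ 2 ≤ f t y)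
    (η : ℕ → ℝ)
    (hη : ∀ t : ℕ, η (t + 1) = 1 / ((∑ k ∈ Finset.Icc 1 t, H k) + ∑ k ∈ Finset.Icc 1 t, lam k))
    (hηpos : ∀ t : ℕ, 1 ≤ t → 0 < η (t + 1))
    (u : ℕ → EuclideanSpace ℝ (Fin n)) (huK : ∀ t, u t ∈ K)
    (hupdate : ∀ t : ℕ, 1 ≤ t → ∀ z ∈ K,
      ‖u (t + 1) - (u t - η (t + 1) • (f' t (u t) + lam t • u t))‖
        ≤ ‖z - (u t - η (t + 1) • (f' t (u t) + lam t • u t))‖) :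
    ∀ ustar ∈ K,
      (∑ t ∈ Finset.Icc 1 T, f t (u t)) - ∑ t ∈ Finset.Icc 1 T, f t ustar
        ≤ D ^ 2 / 2 * (∑ t ∈ Finset.Icc 1 T, lam t)
          + 1 / 2 * ∑ t ∈ Finset.Icc 1 T,
              (G t + lam t * D) ^ 2 /
                ((∑ k ∈ Finset.Icc 1 t, H k) + ∑ k ∈ Finset.Icc 1 t, lam k) := by
  intro ustar hustar
  set S : ℕ → ℝ := fun t => (∑ k ∈ Icc 1 t, H k) + ∑ k ∈ Icc 1 t, lam k with hS
  have hnorm : ∀ x ∈ K, ‖x‖ ≤ D := fun x hx => by simpa using hD x hx 0 h0K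
  have hS_pos : ∀ t, 1 ≤ t → 0 < S t := fun t ht => one_div_pos.mp (hη t ▸ hηpos t ht)
  have hη_inv : ∀ t, η (t + 1) = (S t)⁻¹ := fun t => (hη t).trans (one_div _)
  have hS_succ : ∀ t, S (t + 1) = S t + H (t + 1) + lam (t + 1) := fun t => by
    simp only [hS, sum_Icc_succ_top (Nat.le_add_left 1 t)]
    ring
  have hstep : ∀ t, f (t + 1) (u (t + 1)) - f (t + 1) ustar
      ≤ D ^ 2 / 2 * lam (t + 1) + 1 / 2 * ((G (t + 1) + lam (t + 1) * D) ^ 2 / S (t + 1))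
        + (S t / 2 * ‖u (t + 1) - ustar‖ ^ 2 - S (t + 1) / 2 * ‖u (t + 1 + 1) - ustar‖ ^ 2) := by
    intro t
    have hmin := hupdate (t + 1) (Nat.le_add_left 1 t)
    rw [hη_inv, hS_succ] at hmin
    rw [hS_succ]
    exact regularized_ogd_step hKcv (hlam _) (hG _ _ (huK _)) (hnorm _ (huK _))
      (hnorm _ hustar) hustar (huK _) (hstrong _ _ (huK _) _ hustar)
      (hS_succ t ▸ hS_pos _ (Nat.le_add_left 1 t)) hmin
  have hS_zero : S 0 = 0 := by simp [hS]
  have hlast : 0 ≤ S T / 2 * ‖u (T + 1) - ustar‖ ^ 2 := by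
    rcases Nat.eq_zero_or_pos T with rfl | hT
    · simp [hS_zero]
    · have := hS_pos T hT
      positivity
  have htelescope := sum_Icc_le_sum_add_sub (a := fun t => f t (u t) - f t ustar)
    (c := fun t => D ^ 2 / 2 * lam t + 1 / 2 * ((G t + lam t * D) ^ 2 / S t))
    (φ := fun t => S t / 2 * ‖u (t + 1) - ustar‖ ^ 2) hstep T
  simp only [sum_sub_distrib, sum_add_distrib, ← mul_sum, hS_zero, zero_div, zero_mul]
    at htelescope
  linarith

/-- Lemma 1 (adaptive online gradient descent, Hazan–Rakhlin–Bartlett): for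
`H_t`-strongly convex losses `f_t` with gradient bound `G_t` on `K`, regularizers
`g_t(x) = (λ_t/2)‖x‖²`, and projected gradient updates with adaptive step size
`η_{t+1} = 1/(∑_{k≤t} H_k + ∑_{k≤t} λ_k)`, the regret against any `u* ∈ K` is at most
`(D²/2)∑λ_t + (1/2)∑ (G_t + λ_t D)²/(∑_{k≤t} H_k + ∑_{k≤t} λ_k)`. -/
theorem adaptive_ogd_regret (n T : ℕ)
    (K : Set (EuclideanSpace ℝ (Fin n)))
    (hKne : K.Nonempty) (hKcl : IsClosed K) (hKcv : Convex ℝ K) (h0K : (0 : _) ∈ K)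
    (D : ℝ) (hD : ∀ x ∈ K, ∀ y ∈ K, ‖x - y‖ ≤ D)
    (f : ℕ → EuclideanSpace ℝ (Fin n) → ℝ)
    (f' : ℕ → EuclideanSpace ℝ (Fin n) → EuclideanSpace ℝ (Fin n))
    (G H lam : ℕ → ℝ) (hlam : ∀ t, 0 ≤ lam t) (hHnn : ∀ t, 0 ≤ H t)
    (hgrad : ∀ t x, HasGradientAt (f t) (f' t x) x)
    (hG : ∀ t, ∀ x ∈ K, ‖f' t x‖ ≤ G t)
    (hstrong : ∀ t, ∀ x ∈ K, ∀ y ∈ K,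
      f t x + ⟪f' t x, y - x⟫ + H t / 2 * ‖y - x‖ ^ 2 ≤ f t y)
    (η : ℕ → ℝ)
    (hη : ∀ t : ℕ, η (t + 1) = 1 / ((∑ k ∈ Finset.Icc 1 t, H k) + ∑ k ∈ Finset.Icc 1 t, lam k))
    (hηpos : ∀ t : ℕ, 1 ≤ t → 0 < η (t + 1))
    (u : ℕ → EuclideanSpace ℝ (Fin n)) (hu1 : u 1 ∈ K) (huK : ∀ t, u t ∈ K)
    (hupdate : ∀ t : ℕ, 1 ≤ t → ∀ z ∈ K,
      ‖u (t + 1) - (u t - η (t + 1) • (f' t (u t) + lam t • u t))‖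
        ≤ ‖z - (u t - η (t + 1) • (f' t (u t) + lam t • u t))‖) :
    ∀ ustar ∈ K,
      (∑ t ∈ Finset.Icc 1 T, f t (u t)) - ∑ t ∈ Finset.Icc 1 T, f t ustar
        ≤ D ^ 2 / 2 * (∑ t ∈ Finset.Icc 1 T, lam t)
          + 1 / 2 * ∑ t ∈ Finset.Icc 1 T,
              (G t + lam t * D) ^ 2 /
                ((∑ k ∈ Finset.Icc 1 t, H k) + ∑ k ∈ Finset.Icc 1 t, lam k) :=
  adaptive_ogd_regret_general n T K hKcv h0K D hD f f' G H lam hlam hG hstrong η hη hηpos u huK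
    hupdate
end
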